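/- The sequence q is strictly increasing: q(k) < q(k+1) for every integer k ≥ 0. -/

import Mathlib

/-- `s k` for `k ≥ 1`: `s k = (k/p)·((4m−2)·p + 4) − 2m` if `p ∣ k`, and
`s k = (4m−2)·k + 2·⌊2k/p⌋ − 2m + 2` otherwise.  (For `k ≥ 1` and `p ≥ 3`,
integer division agrees with the floor of the rational quotient.) -/
def sSeq (m p k : ℤ) : ℤ :=
  if p ∣ k then (k / p) * ((4 * m - 2) * p + 4) - 2 * m
  else (4 * m - 2) * k + 2 * ((2 * k) / p) - 2 * m + 2

/-- `Q k`, the top degree of the `k`-th column of the first page of the spectral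
sequence: `Q 0 = 2m+1`, and for `k ≥ 1`, `Q k = 4m−1+s_k−k` if `p ∤ k` and
`Q k = 4m+1+s_k−k` if `p ∣ k`. -/
def QSeq (m p k : ℤ) : ℤ :=
  if k = 0 then 2 * m + 1
  else if p ∣ k then 4 * m + 1 + sSeq m p k - k
  else 4 * m - 1 + sSeq m p k - k

/-- `q k`, the bottom degree of the `k`-th column of the first page of the
spectral sequence: `q 0 = 0` and `q k = s_k − k` for `k ≥ 1`. -/
def qSeq (m p k : ℤ) : ℤ :=
  if k = 0 then 0 else sSeq m p k - k

/-
Write `t k = (4m−2)·k + 2·⌊2k/p⌋ − 2m + 2` for the generic branch of `s`. When `p ∣ k` the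
special branch is exactly `t k − 2`, so `s k = t k − 2·[p ∣ k]`. Going from `k` to `k + 1`,
`t` grows by at least `4m − 2`, and by at least `4m` when `p ∣ k + 1` because then `⌊2k/p⌋`
jumps; this jump pays for the correction `−2·[p ∣ k + 1]`. Hence `s` grows by at least
`4m − 2 ≥ 2` per step and `q` by at least `1`. At `k = 0` one checks `q 1 = s 1 − 1 = 2m − 1`.
-/

theorem Int.ediv_lt_ediv_of_lt_of_dvd {a b p : ℤ} (hp : 0 < p) (hb : p ∣ b) (hab : a < b) :
    a / p < b / p :=
  Int.ediv_lt_of_lt_mul hp (by rwa [Int.ediv_mul_cancel hb])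

theorem sSeq_eq_sub_ite (m p k : ℤ) :
    sSeq m p k = (4 * m - 2) * k + 2 * (2 * k / p) - 2 * m + 2 - if p ∣ k then 2 else 0 := by
  unfold sSeq
  split_ifs with hk
  · rw [Int.mul_ediv_assoc 2 hk]
    nth_rw 2 [← Int.mul_ediv_cancel' hk]
    ring
  · ring

theorem sSeq_add_le_sSeq_succ (m k : ℤ) {p : ℤ} (hp : 0 < p) :
    sSeq m p k + (4 * m - 2) ≤ sSeq m p (k + 1) := by
  have hmono : 2 * k / p ≤ 2 * (k + 1) / p := Int.ediv_le_ediv hp (by omega)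
  have hjump : p ∣ k + 1 → 2 * k / p < 2 * (k + 1) / p := fun hdvd =>
    Int.ediv_lt_ediv_of_lt_of_dvd hp (dvd_mul_of_dvd_right hdvd 2) (by omega)
  rw [sSeq_eq_sub_ite, sSeq_eq_sub_ite, mul_add (4 * m - 2), mul_one]
  split_ifs <;> omega

theorem sSeq_one (m : ℤ) {p : ℤ} (hp : 3 ≤ p) : sSeq m p 1 = 2 * m := by
  have hndvd : ¬ p ∣ 1 := fun h => by have := Int.le_of_dvd one_pos h; omega
  rw [sSeq, if_neg hndvd, mul_one, Int.ediv_eq_zero_of_lt (by norm_num) (by omega)]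
  ring

theorem qSeq_strictMono (m p : ℤ) (hm : 1 ≤ m) (hp : 3 ≤ p) :
    ∀ k : ℤ, 0 ≤ k → qSeq m p k < qSeq m p (k + 1) := by
  intro k hk
  obtain rfl | hk0 := hk.eq_or_lt
  · simp only [qSeq, zero_add, one_ne_zero, ↓reduceIte, sSeq_one m hp]
    omega
  · have hstep := sSeq_add_le_sSeq_succ m k (by omega : 0 < p)
    simp only [qSeq, if_neg hk0.ne', if_neg (by omega : k + 1 ≠ 0)]
    omega
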